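/- Let Ω be a bounded open set in ℝ^d, u, v ∈ H¹(Ω) with u - v ∈ H¹_{0,Γ_D}(Ω), and σ ∈ H(div, Ω). Suppose that for all w ∈ H¹_{0,Γ_D}(Ω), (∇u, ∇w)_Ω = (f, w)_Ω + ⟨g, w⟩_{Γ_N}, and that ∇·σ = f in Ω with σ·n = -g on Γ_N. Then ‖∇(u - v)‖²_{L²(Ω)} + ‖∇u + σ‖²_{L²(Ω)} = ‖∇v + σ‖²_{L²(Ω)} (Prager–Synge identity). -/

import Mathlib

open MeasureTheory
open scoped RealInnerProductSpace

/-!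
Testing both weak equations with `u - v` shows that `∇u + σ` is `L²`-orthogonal to `∇(u - v)`;
the identity is then Pythagoras for `∇v + σ = (∇u + σ) - ∇(u - v)`.
-/

namespace MeasureTheory.MemLp

variable {α E : Type*} [MeasurableSpace α] {μ : Measure α}
  [NormedAddCommGroup E] [InnerProductSpace ℝ E] {F G H : α → E}

omit [InnerProductSpace ℝ E] in
theorem integrable_norm_sq (hF : MemLp F 2 μ) : Integrable (fun x => ‖F x‖ ^ 2) μ :=
  hF.integrable_norm_pow two_ne_zero

theorem integrable_inner (hF : MemLp F 2 μ) (hG : MemLp G 2 μ) :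
    Integrable (fun x => ⟪F x, G x⟫) μ :=
  (L2.integrable_inner (hF.toLp F) (hG.toLp G)).congr <| by
    filter_upwards [hF.coeFn_toLp, hG.coeFn_toLp] with x hFx hGx
    rw [hFx, hGx]

theorem integral_norm_sub_sq (hF : MemLp F 2 μ) (hG : MemLp G 2 μ) :
    ∫ x, ‖F x - G x‖ ^ 2 ∂μ
      = ∫ x, ‖F x‖ ^ 2 ∂μ - 2 * ∫ x, ⟪F x, G x⟫ ∂μ + ∫ x, ‖G x‖ ^ 2 ∂μ := by
  have hFG := (hF.integrable_inner hG).const_mul 2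
  simp_rw [norm_sub_sq_real]
  rw [integral_add (f := fun x => ‖F x‖ ^ 2 - 2 * ⟪F x, G x⟫)
      (hF.integrable_norm_sq.sub hFG) hG.integrable_norm_sq,
    integral_sub hF.integrable_norm_sq hFG, integral_const_mul]

theorem integral_inner_add_eq_zero_of_eq_neg (hF : MemLp F 2 μ) (hG : MemLp G 2 μ)
    (hH : MemLp H 2 μ)
    (h : ∫ x, ⟪G x, H x⟫ ∂μ = -∫ x, ⟪F x, H x⟫ ∂μ) :
    ∫ x, ⟪F x + G x, H x⟫ ∂μ = 0 := by
  simp_rw [inner_add_left]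
  rw [integral_add (hF.integrable_inner hH) (hG.integrable_inner hH), h, add_neg_cancel]

end MeasureTheory.MemLp

/-- `μ` stands for Lebesgue measure on `Ω` and `ν` for surface measure on `Γ_N`; `W` models
`H¹_{0,Γ_D}(Ω)` as pairs (function, weak gradient), and `gu`, `gv` are the weak gradients of
`u`, `v`. -/
theorem prager_synge_identity_general {d : ℕ}
    (μ : Measure (EuclideanSpace ℝ (Fin d)))
    (ν : Measure (EuclideanSpace ℝ (Fin d)))
    (f g : EuclideanSpace ℝ (Fin d) → ℝ)
    (u v : EuclideanSpace ℝ (Fin d) → ℝ)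
    (gu gv σ : EuclideanSpace ℝ (Fin d) → EuclideanSpace ℝ (Fin d))
    (W : Set ((EuclideanSpace ℝ (Fin d) → ℝ) ×
      (EuclideanSpace ℝ (Fin d) → EuclideanSpace ℝ (Fin d))))
    (hgu : MemLp gu 2 μ) (hgv : MemLp gv 2 μ) (hσ : MemLp σ 2 μ)
    -- `u - v ∈ H¹_{0,Γ_D}(Ω)` with weak gradient `gu - gv`
    (huv : (u - v, gu - gv) ∈ W)
    -- variational problem satisfied by `u`
    (hvar : ∀ p ∈ W,
      ∫ x, ⟪gu x, p.2 x⟫ ∂μ = ∫ x, f x * p.1 x ∂μ + ∫ x, g x * p.1 x ∂ν)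
    -- weak form of `∇·σ = f` in `Ω` and `σ·n = -g` on `Γ_N`
    (hdivσ : ∀ p ∈ W,
      ∫ x, ⟪σ x, p.2 x⟫ ∂μ = - ∫ x, f x * p.1 x ∂μ - ∫ x, g x * p.1 x ∂ν) :
    ∫ x, ‖gu x - gv x‖ ^ 2 ∂μ + ∫ x, ‖gu x + σ x‖ ^ 2 ∂μ
      = ∫ x, ‖gv x + σ x‖ ^ 2 ∂μ := by
  have hcross : ∫ x, ⟪gu x + σ x, gu x - gv x⟫ ∂μ = 0 :=
    hgu.integral_inner_add_eq_zero_of_eq_neg hσ (hgu.sub hgv) <| by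
      have hu := hvar _ huv
      have hs := hdivσ _ huv
      simp only [Pi.sub_apply] at hu hs
      rw [hu, hs]
      ring
  calc ∫ x, ‖gu x - gv x‖ ^ 2 ∂μ + ∫ x, ‖gu x + σ x‖ ^ 2 ∂μ
      = ∫ x, ‖(gu x + σ x) - (gu x - gv x)‖ ^ 2 ∂μ := by
        rw [MemLp.integral_norm_sub_sq (F := fun x => gu x + σ x) (G := fun x => gu x - gv x)
          (hgu.add hσ) (hgu.sub hgv), hcross]
        ring
    _ = ∫ x, ‖gv x + σ x‖ ^ 2 ∂μ := by simp_rw [add_sub_sub_cancel, add_comm]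

/-- **Prager–Synge identity.**  `μ` is the Lebesgue measure restricted to the bounded open
set `Ω`, `ν` is the surface measure on the Neumann boundary `Γ_N`.  `W` is the set of
functions of `H¹_{0,Γ_D}(Ω)` paired with their weak gradients; `gu, gv` are the weak
gradients of `u, v` and `σ ∈ H(div,Ω)` satisfies (weakly) `∇·σ = f` in `Ω` and
`σ·n = -g` on `Γ_N`. -/
theorem prager_synge_identity {d : ℕ}
    (Ω ΓN : Set (EuclideanSpace ℝ (Fin d)))
    (hΩopen : IsOpen Ω) (hΩbdd : Bornology.IsBounded Ω) (hΓN : ΓN ⊆ frontier Ω)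
    (μ : Measure (EuclideanSpace ℝ (Fin d))) (hμ : μ = MeasureTheory.volume.restrict Ω)
    (ν : Measure (EuclideanSpace ℝ (Fin d)))
    (f g : EuclideanSpace ℝ (Fin d) → ℝ)
    (u v : EuclideanSpace ℝ (Fin d) → ℝ)
    (gu gv σ : EuclideanSpace ℝ (Fin d) → EuclideanSpace ℝ (Fin d))
    (W : Set ((EuclideanSpace ℝ (Fin d) → ℝ) ×
      (EuclideanSpace ℝ (Fin d) → EuclideanSpace ℝ (Fin d))))
    (hgu : MemLp gu 2 μ) (hgv : MemLp gv 2 μ) (hσ : MemLp σ 2 μ)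
    -- `u - v ∈ H¹_{0,Γ_D}(Ω)` with weak gradient `gu - gv`
    (huv : (u - v, gu - gv) ∈ W)
    -- variational problem satisfied by `u`
    (hvar : ∀ p ∈ W,
      ∫ x, ⟪gu x, p.2 x⟫ ∂μ = ∫ x, f x * p.1 x ∂μ + ∫ x, g x * p.1 x ∂ν)
    -- weak form of `∇·σ = f` in `Ω` and `σ·n = -g` on `Γ_N`
    (hdivσ : ∀ p ∈ W,
      ∫ x, ⟪σ x, p.2 x⟫ ∂μ = - ∫ x, f x * p.1 x ∂μ - ∫ x, g x * p.1 x ∂ν) :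
    ∫ x, ‖gu x - gv x‖ ^ 2 ∂μ + ∫ x, ‖gu x + σ x‖ ^ 2 ∂μ
      = ∫ x, ‖gv x + σ x‖ ^ 2 ∂μ :=
  prager_synge_identity_general μ ν f g u v gu gv σ W hgu hgv hσ huv hvar hdivσ
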